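/- arXiv:2605.01062 — 2 statements merged into one kernel-verified Lean document; each statement's English description precedes it below -/
import Mathlib

section
/- Let F_1 ≠ F_2 be Borel probability measures on ℝ^p with ∫‖x‖^ω dF_1 < ∞ and ∫‖x‖^ω dF_2 < ∞ for a fixed 0 < ω < 2. For a, b ∈ [0,1], let P_a = a·F_1 + (1−a)·F_2 and P_b = b·F_1 + (1−b)·F_2 be the corresponding mixture measures, and let Δ = 𝓔(F_1,F_2). Then 𝓔(P_a, P_b) = (a−b)²·Δ. -/
open MeasureTheory

/-- Population energy distance with exponent `ω`:
`𝓔(P,Q) = 2∫∫‖x−y‖^ω dP dQ − ∫∫‖x−x'‖^ω dP dP − ∫∫‖y−y'‖^ω dQ dQ`. -/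
noncomputable def energyDist {p : ℕ} (ω : ℝ)
    (P Q : Measure (EuclideanSpace ℝ (Fin p))) : ℝ :=
  2 * ∫ x, ∫ y, ‖x - y‖ ^ ω ∂Q ∂P
    - ∫ x, ∫ y, ‖x - y‖ ^ ω ∂P ∂P
    - ∫ x, ∫ y, ‖x - y‖ ^ ω ∂Q ∂Q

section aux

variable {p : ℕ} {ω : ℝ}

private lemma ed_bound (hω0 : 0 < ω) (x y : EuclideanSpace ℝ (Fin p)) :
    ‖x - y‖ ^ ω ≤ 2 ^ ω * (‖x‖ ^ ω + ‖y‖ ^ ω) := by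
  have h1 : ‖x - y‖ ^ ω ≤ (‖x‖ + ‖y‖) ^ ω :=
    Real.rpow_le_rpow (norm_nonneg _) (norm_sub_le x y) hω0.le
  have h2 : ‖x‖ + ‖y‖ ≤ 2 * max ‖x‖ ‖y‖ := by
    rw [two_mul]; exact add_le_add (le_max_left _ _) (le_max_right _ _)
  have h3 : (‖x‖ + ‖y‖) ^ ω ≤ (2 * max ‖x‖ ‖y‖) ^ ω :=
    Real.rpow_le_rpow (by positivity) h2 hω0.le
  have h4 : (2 * max ‖x‖ ‖y‖) ^ ω = 2 ^ ω * (max ‖x‖ ‖y‖) ^ ω :=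
    Real.mul_rpow (by norm_num) (le_max_of_le_left (norm_nonneg _))
  have h5 : (max ‖x‖ ‖y‖) ^ ω ≤ ‖x‖ ^ ω + ‖y‖ ^ ω := by
    rcases max_cases ‖x‖ ‖y‖ with ⟨h, _⟩ | ⟨h, _⟩ <;> rw [h]
    · exact le_add_of_nonneg_right (Real.rpow_nonneg (norm_nonneg _) _)
    · exact le_add_of_nonneg_left (Real.rpow_nonneg (norm_nonneg _) _)
  calc ‖x - y‖ ^ ω ≤ (‖x‖ + ‖y‖) ^ ω := h1
    _ ≤ (2 * max ‖x‖ ‖y‖) ^ ω := h3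
    _ = 2 ^ ω * (max ‖x‖ ‖y‖) ^ ω := h4
    _ ≤ 2 ^ ω * (‖x‖ ^ ω + ‖y‖ ^ ω) := by
        have : (0:ℝ) ≤ 2 ^ ω := Real.rpow_nonneg (by norm_num) _
        nlinarith [h5]

private lemma ed_cont (hω0 : 0 < ω) :
    Continuous fun q : EuclideanSpace ℝ (Fin p) × EuclideanSpace ℝ (Fin p) =>
      ‖q.1 - q.2‖ ^ ω := by
  have hr : Continuous fun t : ℝ => t ^ ω :=
    continuous_iff_continuousAt.2 fun t => Real.continuousAt_rpow_const t ω (Or.inr hω0.le)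
  exact hr.comp (continuous_fst.sub continuous_snd).norm

private lemma ed_int_prod (hω0 : 0 < ω)
    (μ ν : Measure (EuclideanSpace ℝ (Fin p)))
    [IsProbabilityMeasure μ] [IsProbabilityMeasure ν]
    (hμ : Integrable (fun x => ‖x‖ ^ ω) μ) (hν : Integrable (fun x => ‖x‖ ^ ω) ν) :
    Integrable (fun q : EuclideanSpace ℝ (Fin p) × EuclideanSpace ℝ (Fin p) =>
      ‖q.1 - q.2‖ ^ ω) (μ.prod ν) := by
  have hfst : Integrable (fun q : EuclideanSpace ℝ (Fin p) × EuclideanSpace ℝ (Fin p) =>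
      ‖q.1‖ ^ ω) (μ.prod ν) := by
    simpa using hμ.mul_prod (integrable_const (1 : ℝ))
  have hsnd : Integrable (fun q : EuclideanSpace ℝ (Fin p) × EuclideanSpace ℝ (Fin p) =>
      ‖q.2‖ ^ ω) (μ.prod ν) := by
    simpa using (integrable_const (1 : ℝ)).mul_prod hν
  have hg : Integrable (fun q : EuclideanSpace ℝ (Fin p) × EuclideanSpace ℝ (Fin p) =>
      2 ^ ω * (‖q.1‖ ^ ω + ‖q.2‖ ^ ω)) (μ.prod ν) := (hfst.add hsnd).const_mul _
  refine hg.mono' (ed_cont hω0).aestronglyMeasurable ?_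
  refine Filter.Eventually.of_forall fun q => ?_
  rw [Real.norm_of_nonneg (Real.rpow_nonneg (norm_nonneg _) _)]
  exact ed_bound hω0 q.1 q.2

private lemma ed_int_inner (hω0 : 0 < ω) (x : EuclideanSpace ℝ (Fin p))
    (ν : Measure (EuclideanSpace ℝ (Fin p))) [IsProbabilityMeasure ν]
    (hν : Integrable (fun x => ‖x‖ ^ ω) ν) :
    Integrable (fun y => ‖x - y‖ ^ ω) ν := by
  have hg : Integrable (fun y : EuclideanSpace ℝ (Fin p) =>
      2 ^ ω * (‖x‖ ^ ω + ‖y‖ ^ ω)) ν := ((integrable_const _).add hν).const_mul _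
  refine hg.mono' ?_ ?_
  · exact ((ed_cont hω0).comp (Continuous.prodMk_right x)).aestronglyMeasurable
  · refine Filter.Eventually.of_forall fun y => ?_
    rw [Real.norm_of_nonneg (Real.rpow_nonneg (norm_nonneg _) _)]
    exact ed_bound hω0 x y

private lemma ed_int_outer (hω0 : 0 < ω)
    (μ ν : Measure (EuclideanSpace ℝ (Fin p)))
    [IsProbabilityMeasure μ] [IsProbabilityMeasure ν]
    (hμ : Integrable (fun x => ‖x‖ ^ ω) μ) (hν : Integrable (fun x => ‖x‖ ^ ω) ν) :
    Integrable (fun x => ∫ y, ‖x - y‖ ^ ω ∂ν) μ :=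
  (ed_int_prod hω0 μ ν hμ hν).integral_prod_left

private lemma ed_swap (hω0 : 0 < ω)
    (μ ν : Measure (EuclideanSpace ℝ (Fin p)))
    [IsProbabilityMeasure μ] [IsProbabilityMeasure ν]
    (hμ : Integrable (fun x => ‖x‖ ^ ω) μ) (hν : Integrable (fun x => ‖x‖ ^ ω) ν) :
    ∫ x, ∫ y, ‖x - y‖ ^ ω ∂ν ∂μ = ∫ y, ∫ x, ‖y - x‖ ^ ω ∂μ ∂ν := by
  have h := integral_integral_swap (f := fun x y => ‖x - y‖ ^ ω)
    (ed_int_prod hω0 μ ν hμ hν)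
  rw [h]
  congr 1
  ext y
  congr 1
  ext x
  rw [norm_sub_rev]

private lemma integral_mix (μ₁ μ₂ : Measure (EuclideanSpace ℝ (Fin p)))
    (f : EuclideanSpace ℝ (Fin p) → ℝ)
    (hf1 : Integrable f μ₁) (hf2 : Integrable f μ₂)
    (a : ℝ) (ha0 : 0 ≤ a) (ha1 : a ≤ 1) :
    ∫ x, f x ∂(ENNReal.ofReal a • μ₁ + ENNReal.ofReal (1 - a) • μ₂)
      = a * ∫ x, f x ∂μ₁ + (1 - a) * ∫ x, f x ∂μ₂ := by
  rw [integral_add_measure (hf1.smul_measure ENNReal.ofReal_ne_top)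
      (hf2.smul_measure ENNReal.ofReal_ne_top),
    integral_smul_measure, integral_smul_measure,
    ENNReal.toReal_ofReal ha0, ENNReal.toReal_ofReal (by linarith),
    smul_eq_mul, smul_eq_mul]

end aux

/-- Energy distance between two mixtures of `F₁` and `F₂`:
`𝓔(aF₁+(1−a)F₂, bF₁+(1−b)F₂) = (a−b)²·𝓔(F₁,F₂)`. -/
theorem energyDist_mixtures {p : ℕ} (ω : ℝ) (hω0 : 0 < ω) (hω2 : ω < 2)
    (F₁ F₂ : Measure (EuclideanSpace ℝ (Fin p)))
    [IsProbabilityMeasure F₁] [IsProbabilityMeasure F₂] (hne : F₁ ≠ F₂)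
    (h1 : Integrable (fun x => ‖x‖ ^ ω) F₁)
    (h2 : Integrable (fun x => ‖x‖ ^ ω) F₂)
    (a b : ℝ) (ha : a ∈ Set.Icc (0 : ℝ) 1) (hb : b ∈ Set.Icc (0 : ℝ) 1) :
    energyDist ω (ENNReal.ofReal a • F₁ + ENNReal.ofReal (1 - a) • F₂)
        (ENNReal.ofReal b • F₁ + ENNReal.ofReal (1 - b) • F₂)
      = (a - b) ^ 2 * energyDist ω F₁ F₂ := by
  obtain ⟨ha0, ha1⟩ := ha
  obtain ⟨hb0, hb1⟩ := hb
  set g₁ : EuclideanSpace ℝ (Fin p) → ℝ := fun x => ∫ y, ‖x - y‖ ^ ω ∂F₁ with hg₁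
  set g₂ : EuclideanSpace ℝ (Fin p) → ℝ := fun x => ∫ y, ‖x - y‖ ^ ω ∂F₂ with hg₂
  -- outer integrability
  have hI11 : Integrable g₁ F₁ := ed_int_outer hω0 F₁ F₁ h1 h1
  have hI12 : Integrable g₂ F₁ := ed_int_outer hω0 F₁ F₂ h1 h2
  have hI21 : Integrable g₁ F₂ := ed_int_outer hω0 F₂ F₁ h2 h1
  have hI22 : Integrable g₂ F₂ := ed_int_outer hω0 F₂ F₂ h2 h2
  -- the general iterated-integral computation for mixtures
  have key : ∀ c d : ℝ, 0 ≤ c → c ≤ 1 → 0 ≤ d → d ≤ 1 →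
      ∫ x, ∫ y, ‖x - y‖ ^ ω ∂(ENNReal.ofReal d • F₁ + ENNReal.ofReal (1 - d) • F₂)
        ∂(ENNReal.ofReal c • F₁ + ENNReal.ofReal (1 - c) • F₂)
      = c * (d * ∫ x, g₁ x ∂F₁ + (1 - d) * ∫ x, g₂ x ∂F₁)
        + (1 - c) * (d * ∫ x, g₁ x ∂F₂ + (1 - d) * ∫ x, g₂ x ∂F₂) := by
    intro c d hc0 hc1 hd0 hd1
    have hinner : ∀ x : EuclideanSpace ℝ (Fin p),
        ∫ y, ‖x - y‖ ^ ω ∂(ENNReal.ofReal d • F₁ + ENNReal.ofReal (1 - d) • F₂)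
          = d * g₁ x + (1 - d) * g₂ x := fun x =>
      integral_mix F₁ F₂ _ (ed_int_inner hω0 x F₁ h1) (ed_int_inner hω0 x F₂ h2) d hd0 hd1
    rw [show (fun x => ∫ y, ‖x - y‖ ^ ω
        ∂(ENNReal.ofReal d • F₁ + ENNReal.ofReal (1 - d) • F₂))
        = fun x => d * g₁ x + (1 - d) * g₂ x from funext hinner]
    have hmix := integral_mix F₁ F₂ (fun x => d * g₁ x + (1 - d) * g₂ x)
      (by exact (hI11.const_mul d).add (hI12.const_mul (1 - d)))
      (by exact (hI21.const_mul d).add (hI22.const_mul (1 - d))) c hc0 hc1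
    rw [hmix]
    rw [integral_add (hI11.const_mul d) (hI12.const_mul (1 - d)),
      integral_add (hI21.const_mul d) (hI22.const_mul (1 - d)),
      integral_const_mul, integral_const_mul, integral_const_mul, integral_const_mul]
  have hswap : ∫ x, g₁ x ∂F₂ = ∫ x, g₂ x ∂F₁ := by
    simpa [hg₁, hg₂] using (ed_swap hω0 F₂ F₁ h2 h1)
  unfold energyDist
  rw [key a b ha0 ha1 hb0 hb1, key a a ha0 ha1 ha0 ha1, key b b hb0 hb1 hb0 hb1]
  have e1 : ∫ x, ∫ y, ‖x - y‖ ^ ω ∂F₂ ∂F₁ = ∫ x, g₂ x ∂F₁ := rfl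
  have e2 : ∫ x, ∫ y, ‖x - y‖ ^ ω ∂F₁ ∂F₁ = ∫ x, g₁ x ∂F₁ := rfl
  have e3 : ∫ x, ∫ y, ‖x - y‖ ^ ω ∂F₂ ∂F₂ = ∫ x, g₂ x ∂F₂ := rfl
  rw [e1, e2, e3, hswap]
  ring
end

section
/- Let F_1 ≠ F_2 be Borel probability measures on ℝ^p with finite first moments (∫‖x‖ dF_i < ∞), and set Δ = 𝓔(F_1,F_2) with ω = 1. Fix τ ∈ (0,1). Then: (i) for 0 < γ ≤ τ, the energy distance between F_1 and the mixture ((τ−γ)/(1−γ))·F_1 + ((1−τ)/(1−γ))·F_2 equals ((1−τ)/(1−γ))²·Δ; (ii) for τ ≤ γ < 1, the energy distance between the mixture (τ/γ)·F_1 + ((γ−τ)/γ)·F_2 and F_2 equals (τ/γ)²·Δ. -/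
open MeasureTheory

section Aux

variable {p : ℕ}

local notation "E" => EuclideanSpace ℝ (Fin p)

lemma int_sub (P : Measure E) [IsFiniteMeasure P]
    (hP : Integrable (fun x => ‖x‖) P) (x : E) :
    Integrable (fun y => ‖x - y‖) P := by
  refine ((integrable_const ‖x‖).add hP).mono'
    ((continuous_const.sub continuous_id).norm.aestronglyMeasurable) ?_
  filter_upwards with y
  simpa [Real.norm_of_nonneg (norm_nonneg _)] using norm_sub_le x y

lemma prodInt (P Q : Measure E) [IsFiniteMeasure P] [IsFiniteMeasure Q]
    (hP : Integrable (fun x => ‖x‖) P) (hQ : Integrable (fun x => ‖x‖) Q) :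
    Integrable (fun z : E × E => ‖z.1 - z.2‖) (P.prod Q) := by
  have h1 : Integrable (fun z : E × E => ‖z.1‖ * (1 : ℝ)) (P.prod Q) :=
    hP.mul_prod (integrable_const 1)
  have h2 : Integrable (fun z : E × E => (1 : ℝ) * ‖z.2‖) (P.prod Q) :=
    (integrable_const 1).mul_prod hQ
  refine (h1.add h2).mono'
    ((continuous_fst.sub continuous_snd).norm.aestronglyMeasurable) ?_
  filter_upwards with z
  simpa [Real.norm_of_nonneg (norm_nonneg _)] using norm_sub_le z.1 z.2

lemma Kswap (P Q : Measure E) [IsFiniteMeasure P] [IsFiniteMeasure Q]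
    (hP : Integrable (fun x => ‖x‖) P) (hQ : Integrable (fun x => ‖x‖) Q) :
    ∫ x, ∫ y, ‖x - y‖ ∂Q ∂P = ∫ x, ∫ y, ‖x - y‖ ∂P ∂Q := by
  rw [integral_integral_swap (f := fun x y => ‖x - y‖) (prodInt P Q hP hQ)]
  simp_rw [norm_sub_rev]

lemma gInt (P Q : Measure E) [IsFiniteMeasure P] [IsFiniteMeasure Q]
    (hP : Integrable (fun x => ‖x‖) P) (hQ : Integrable (fun x => ‖x‖) Q) :
    Integrable (fun x => ∫ y, ‖x - y‖ ∂Q) P :=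
  (prodInt P Q hP hQ).integral_prod_left

lemma energy_mix (P Q : Measure E) [IsProbabilityMeasure P] [IsProbabilityMeasure Q]
    (hP : Integrable (fun x => ‖x‖) P) (hQ : Integrable (fun x => ‖x‖) Q)
    (a b : ℝ) (ha : 0 ≤ a) (hb : 0 ≤ b) (hab : a + b = 1) :
    energyDist 1 P (ENNReal.ofReal a • P + ENNReal.ofReal b • Q)
      = b ^ 2 * energyDist 1 P Q := by
  unfold energyDist
  simp only [Real.rpow_one]
  set μ : Measure E := ENNReal.ofReal a • P + ENNReal.ofReal b • Q with hμ
  have hg : ∀ x : E, ∫ y, ‖x - y‖ ∂μ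
      = a * ∫ y, ‖x - y‖ ∂P + b * ∫ y, ‖x - y‖ ∂Q := by
    intro x
    rw [hμ, integral_add_measure ((int_sub P hP x).smul_measure ENNReal.ofReal_ne_top)
        ((int_sub Q hQ x).smul_measure ENNReal.ofReal_ne_top),
      integral_smul_measure, integral_smul_measure,
      ENNReal.toReal_ofReal ha, ENNReal.toReal_ofReal hb]
    simp [smul_eq_mul]
  have hgP := gInt P P hP hP
  have hgQ := gInt P Q hP hQ
  have hgP' := gInt Q P hQ hP
  have hgQ' := gInt Q Q hQ hQ
  have houter : ∀ (ν : Measure E), ∫ x, ∫ y, ‖x - y‖ ∂μ ∂ν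
      = ∫ x, (a * ∫ y, ‖x - y‖ ∂P + b * ∫ y, ‖x - y‖ ∂Q) ∂ν := by
    intro ν; exact integral_congr_ae (Filter.Eventually.of_forall hg)
  set A := ∫ x, ∫ y, ‖x - y‖ ∂P ∂P with hA
  set B := ∫ x, ∫ y, ‖x - y‖ ∂Q ∂Q with hB
  set C := ∫ x, ∫ y, ‖x - y‖ ∂Q ∂P with hC
  have hCswap : ∫ x, ∫ y, ‖x - y‖ ∂P ∂Q = C := (Kswap P Q hP hQ).symm
  have h1 : ∫ x, ∫ y, ‖x - y‖ ∂μ ∂P = a * A + b * C := by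
    rw [houter P, integral_add (hgP.const_mul a) (hgQ.const_mul b),
      integral_const_mul, integral_const_mul]
  have h2 : ∫ x, ∫ y, ‖x - y‖ ∂μ ∂Q = a * C + b * B := by
    rw [houter Q, integral_add (hgP'.const_mul a) (hgQ'.const_mul b),
      integral_const_mul, integral_const_mul, hCswap]
  have hmid : ∫ x, ∫ y, ‖x - y‖ ∂μ ∂μ = a * (a * A + b * C) + b * (a * C + b * B) := by
    have hInt1 : Integrable (fun x => ∫ y, ‖x - y‖ ∂μ) P := by
      refine ((hgP.const_mul a).add (hgQ.const_mul b)).congr ?_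
      filter_upwards with x using (hg x).symm
    have hInt2 : Integrable (fun x => ∫ y, ‖x - y‖ ∂μ) Q := by
      refine ((hgP'.const_mul a).add (hgQ'.const_mul b)).congr ?_
      filter_upwards with x using (hg x).symm
    rw [hμ, integral_add_measure (hInt1.smul_measure ENNReal.ofReal_ne_top)
        (hInt2.smul_measure ENNReal.ofReal_ne_top),
      integral_smul_measure, integral_smul_measure,
      ENNReal.toReal_ofReal ha, ENNReal.toReal_ofReal hb]
    simp [smul_eq_mul, h1, h2]
  rw [h1, hmid]
  have : a = 1 - b := by linarith
  subst this
  ring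

lemma energy_symm (P Q : Measure E) [IsFiniteMeasure P] [IsFiniteMeasure Q]
    (hP : Integrable (fun x => ‖x‖) P) (hQ : Integrable (fun x => ‖x‖) Q) :
    energyDist 1 P Q = energyDist 1 Q P := by
  unfold energyDist
  simp only [Real.rpow_one]
  rw [Kswap P Q hP hQ]
  ring

end Aux

/-- Energy distance (with `ω = 1`) between a pure component and the mixtures arising
from splitting a single change-point model at `γ`:
(i) for `0 < γ ≤ τ`, `𝓔(F₁, ((τ−γ)/(1−γ))F₁ + ((1−τ)/(1−γ))F₂) = ((1−τ)/(1−γ))²·Δ`;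
(ii) for `τ ≤ γ < 1`, `𝓔((τ/γ)F₁ + ((γ−τ)/γ)F₂, F₂) = (τ/γ)²·Δ`,
where `Δ = 𝓔(F₁,F₂)`. -/
theorem energyDist_segment_mixtures {p : ℕ}
    (F₁ F₂ : Measure (EuclideanSpace ℝ (Fin p)))
    [IsProbabilityMeasure F₁] [IsProbabilityMeasure F₂] (hne : F₁ ≠ F₂)
    (h1 : Integrable (fun x => ‖x‖) F₁) (h2 : Integrable (fun x => ‖x‖) F₂)
    (τ : ℝ) (hτ : τ ∈ Set.Ioo (0 : ℝ) 1) :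
    (∀ γ : ℝ, 0 < γ → γ ≤ τ →
      energyDist 1 F₁
          (ENNReal.ofReal ((τ - γ) / (1 - γ)) • F₁
            + ENNReal.ofReal ((1 - τ) / (1 - γ)) • F₂)
        = ((1 - τ) / (1 - γ)) ^ 2 * energyDist 1 F₁ F₂) ∧
    (∀ γ : ℝ, τ ≤ γ → γ < 1 →
      energyDist 1
          (ENNReal.ofReal (τ / γ) • F₁ + ENNReal.ofReal ((γ - τ) / γ) • F₂) F₂
        = (τ / γ) ^ 2 * energyDist 1 F₁ F₂) := by
  obtain ⟨hτ0, hτ1⟩ := hτ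
  constructor
  · intro γ hγ0 hγτ
    have hγ1 : γ < 1 := lt_of_le_of_lt hγτ hτ1
    have hd : (0:ℝ) < 1 - γ := by linarith
    refine energy_mix F₁ F₂ h1 h2 _ _ ?_ ?_ ?_
    · exact div_nonneg (by linarith) hd.le
    · exact div_nonneg (by linarith) hd.le
    · field_simp; ring
  · intro γ hτγ hγ1
    have hγ0 : (0:ℝ) < γ := lt_of_lt_of_le hτ0 hτγ
    have ha : (0:ℝ) ≤ τ / γ := div_nonneg hτ0.le hγ0.le
    have hb : (0:ℝ) ≤ (γ - τ) / γ := div_nonneg (by linarith) hγ0.le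
    have hab : (γ - τ) / γ + τ / γ = 1 := by field_simp; ring
    have key := energy_mix F₂ F₁ h2 h1 ((γ - τ) / γ) (τ / γ) hb ha hab
    have hmix : Integrable (fun x => ‖x‖)
        (ENNReal.ofReal (τ / γ) • F₁ + ENNReal.ofReal ((γ - τ) / γ) • F₂) := by
      exact (h1.smul_measure ENNReal.ofReal_ne_top).add_measure
        (h2.smul_measure ENNReal.ofReal_ne_top)
    have hfin : IsFiniteMeasure
        (ENNReal.ofReal (τ / γ) • F₁ + ENNReal.ofReal ((γ - τ) / γ) • F₂) := by
      constructor
      simp [ENNReal.add_lt_top, ENNReal.mul_lt_top, ENNReal.ofReal_lt_top, lt_top_iff_ne_top]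
    have hcomm : ENNReal.ofReal (τ / γ) • F₁ + ENNReal.ofReal ((γ - τ) / γ) • F₂
        = ENNReal.ofReal ((γ - τ) / γ) • F₂ + ENNReal.ofReal (τ / γ) • F₁ :=
      add_comm _ _
    rw [energy_symm _ F₂ hmix h2, hcomm, key, energy_symm F₂ F₁ h2 h1]
end
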